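/- Let $n \geq 2$, $1 \leq k \leq n/2$, and $\lambda_1, \ldots, \lambda_n$ be real numbers. Then $\sum_{(i_1,\ldots,i_{2k})} (\lambda_{i_1} + \lambda_{i_2})(\lambda_{i_3} + \lambda_{i_4}) \cdots (\lambda_{i_{2k-1}} + \lambda_{i_{2k}}) = \frac{2^k\,(n-k)!\,k!}{(n-2k)!} \, \sigma_k(\lambda_1,\ldots,\lambda_n)$, where the sum runs over all ordered $2k$-tuples of pairwise distinct indices in $\{1,\ldots,n\}$ and $\sigma_k$ is the $k$-th elementary symmetric polynomial. -/

import Mathlib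

open Finset Function Nat

/-!
Expanding each factor `λ_{f(2j)} + λ_{f(2j+1)}` amounts to choosing, for each pair, one of its two
positions; each of the `2^k` choices is an injection `e : Fin k → Fin (2k)`, and the term becomes
`∏ j, λ_{f(e j)}`. For a fixed `e`, every injection `g : Fin k → Fin n` is `f ∘ e` for exactly
`(n-k)!/(n-2k)!` injections `f`, and summing `∏ j, λ_{g j}` over all injections `g` counts each
`k`-subset `k!` times.
-/

variable {ι κ α : Type*} [Fintype ι] [Fintype κ] [Fintype α] [DecidableEq α]

theorem Fintype.prod_add_eq_sum_prod_piecewise [DecidableEq ι] {β R : Type*} [CommSemiring R]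
    (x : β → R) (f g : ι → β) :
    ∏ i, (x (f i) + x (g i)) = ∑ t : Finset ι, ∏ i, x (t.piecewise f g i) := by
  have hx (t : Finset ι) : (fun i => x (t.piecewise f g i)) = t.piecewise (x ∘ f) (x ∘ g) := by
    funext i
    by_cases hi : i ∈ t <;> simp [hi]
  simp only [Fintype.prod_add, hx, prod_piecewise, univ_inter, compl_eq_univ_sdiff, comp_apply]

theorem sum_filter_injective_eq_sum_embedding [DecidableEq ι] {M : Type*} [AddCommMonoid M]
    (F : (ι → α) → M) :
    ∑ f ∈ univ.filter Injective, F f = ∑ f : ι ↪ α, F f := by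
  rw [sum_subtype _ (p := Injective) fun f => by simp]
  exact Fintype.sum_equiv (Equiv.subtypeInjectiveEquivEmbedding ι α) _ _ fun _ => rfl

theorem card_filter_map_embedding_eq {s : Finset α} (hs : #s = Fintype.card ι) :
    #{g : ι ↪ α | univ.map g = s} = (Fintype.card ι)! := by
  have hmap : ∀ g : ι ↪ α, univ.map g = s ↔ ∀ i, g i ∈ s := fun g => by
    refine ⟨fun h i => h ▸ mem_map_of_mem g (mem_univ i), fun h => ?_⟩
    refine eq_of_subset_of_card_le (fun a ha => ?_) (by simp [hs])
    obtain ⟨i, -, rfl⟩ := mem_map.mp ha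
    exact h i
  rw [filter_congr fun g _ => hmap g, ← Fintype.card_subtype]
  refine (Fintype.card_congr (Equiv.codRestrict ι (s : Set α))).trans ?_
  simp [Fintype.card_embedding_eq, hs, Nat.descFactorial_self]

theorem sum_embedding_prod_eq {R : Type*} [CommSemiring R] (x : α → R) :
    ∑ g : ι ↪ α, ∏ i, x (g i) =
      (Fintype.card ι)! • ∑ s ∈ powersetCard (Fintype.card ι) univ, ∏ a ∈ s, x a := by
  have hmaps : ∀ g ∈ (univ : Finset (ι ↪ α)), univ.map g ∈ powersetCard (Fintype.card ι) univ := by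
    simp
  rw [← sum_fiberwise_of_maps_to hmaps, smul_sum]
  refine sum_congr rfl fun s hs => ?_
  rw [← card_filter_map_embedding_eq (mem_powersetCard.mp hs).2, ← sum_const]
  refine sum_congr rfl fun g hg => ?_
  rw [← (mem_filter.mp hg).2, prod_map]

theorem sum_embedding_inl_trans {β M : Type*} [Fintype β] [AddCommMonoid M]
    (F : (ι ↪ α) → M) :
    ∑ f : ι ⊕ β ↪ α, F (Embedding.inl.trans f) =
      (Fintype.card α - Fintype.card ι).descFactorial (Fintype.card β) • ∑ g, F g := by
  rw [Fintype.sum_equiv Equiv.sumEmbeddingEquivSigmaEmbeddingRestricted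
    (fun f => F (Embedding.inl.trans f)) (fun p => F p.1) fun _ => rfl, Fintype.sum_sigma, smul_sum]
  refine sum_congr rfl fun g _ => ?_
  rw [Fintype.sum_congr _ (fun _ => F g) fun _ => rfl, sum_const, Finset.card_univ,
    Fintype.card_embedding_eq, Fintype.card_compl_set, Fintype.card_range]

theorem sum_embedding_trans [DecidableEq κ] {M : Type*} [AddCommMonoid M] (e : ι ↪ κ)
    (F : (ι ↪ α) → M) :
    ∑ f : κ ↪ α, F (e.trans f) =
      (Fintype.card α - Fintype.card ι).descFactorial (Fintype.card κ - Fintype.card ι) •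
        ∑ g, F g := by
  let Φ : ι ⊕ ↥(Set.range e)ᶜ ≃ κ :=
    (Equiv.sumCongr (Equiv.ofInjective e e.injective) (Equiv.refl _)).trans
      (Equiv.Set.sumCompl _)
  have hcard : Fintype.card κ - Fintype.card ι = Fintype.card ↥(Set.range e)ᶜ := by
    rw [Fintype.card_compl_set, Fintype.card_range]
  rw [hcard, ← sum_embedding_inl_trans]
  exact Fintype.sum_equiv (Equiv.embeddingCongr Φ.symm (Equiv.refl α)) _ _
    fun f => congrArg F (Embedding.ext fun i => by simp [Φ])

theorem sum_distinct_tuples_pair_sums (n k : ℕ)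
    (hkn : 2 * k ≤ n) (lam : Fin n → ℝ) :
    ∑ f ∈ Finset.univ.filter (fun f : Fin (2 * k) → Fin n => Function.Injective f),
      ∏ j : Fin k,
        (lam (f ⟨2 * j, by have := j.isLt; omega⟩) +
         lam (f ⟨2 * j + 1, by have := j.isLt; omega⟩)) =
    ((2 ^ k * (n - k).factorial * k.factorial : ℕ) : ℝ) / ((n - 2 * k).factorial : ℝ) *
      ∑ s ∈ Finset.powersetCard k (Finset.univ : Finset (Fin n)), ∏ i ∈ s, lam i := by
  let even : Fin k → Fin (2 * k) := fun j => ⟨2 * j, by omega⟩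
  let odd : Fin k → Fin (2 * k) := fun j => ⟨2 * j + 1, by omega⟩
  have hinj (t : Finset (Fin k)) : Injective (t.piecewise even odd) := by
    refine HasLeftInverse.injective ⟨fun i => ⟨i / 2, by omega⟩, fun j => Fin.ext ?_⟩
    by_cases hj : j ∈ t <;> simp [hj, even, odd, Nat.mul_add_div]
  have hfac : (n - 2 * k)! * (n - k).descFactorial k = (n - k)! := by
    rw [← Nat.factorial_mul_descFactorial (by omega : k ≤ n - k), Nat.sub_sub, two_mul]
  calc _ = ∑ f : Fin (2 * k) ↪ Fin n, ∑ t : Finset (Fin k),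
          ∏ j, lam ((⟨_, hinj t⟩ : Fin k ↪ Fin (2 * k)).trans f j) := by
        rw [sum_filter_injective_eq_sum_embedding]
        exact sum_congr rfl fun f _ => Fintype.prod_add_eq_sum_prod_piecewise (lam ∘ f) even odd
    _ = 2 ^ k * (n - k).descFactorial k * k ! *
          ∑ s ∈ powersetCard k univ, ∏ i ∈ s, lam i := by
        rw [sum_comm]
        refine (sum_congr rfl fun t _ => sum_embedding_trans _ fun g => ∏ j, lam (g j)).trans ?_
        simp only [sum_embedding_prod_eq, Fintype.card_fin, sum_const,
          Finset.card_univ, Fintype.card_finset, nsmul_eq_mul, show 2 * k - k = k by omega]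
        push_cast
        ring
    _ = _ := by
        rw [div_mul_eq_mul_div, eq_div_iff (by positivity), ← hfac]
        push_cast
        ring
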